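/- Let q ∈ (0,1), set K(m) := ∫₀¹ dt/√((1−t²)(1−m²t²)) for 0 < m < 1 and K′ := K(√(1−q²)). Suppose s ∈ (0,1) satisfies ∫₀^s dt/√((1−t²)(1−(1−q²)t²)) = K′/4. Then 1 − (1−q²)s² = √q·(√(1+q) + 1)/(√(1+q) + √q); equivalently, dn(K′/4, √(1−q²)) = q^{1/4}(√(1+q)+1)^{1/2}(√(1+q)+√q)^{−1/2}. -/

import Mathlib

/-! Write `F(x) = ∫₀ˣ dt/√((1-t²)(1-mt²))` with `m = 1 - q²`, so that `sn = F⁻¹` and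
`K' = F 1`. By the addition theorem, `sn (c - u)` is an explicit algebraic function of
`t = sn u` and `a = sn c`; differentiating shows `F (sn (c - u)) + F t = F a` for `t ∈ [0, a]`.
Its fixed point `sn (c / 2)` therefore satisfies `2 F (sn (c / 2)) = F a`. Applying this with
`c = K'` and then `c = K' / 2` identifies `s = sn (K' / 4)`, and the half-argument formula
`dn² (c / 2) = (cn c + dn c) / (1 + cn c)`, with `cn (K' / 2) = √(q / (1 + q))` and
`dn (K' / 2) = √q`, gives the value. -/

open Real Set MeasureTheory intervalIntegral

noncomputable def ellipticIntegrand (m t : ℝ) : ℝ := 1 / √((1 - t ^ 2) * (1 - m * t ^ 2))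

/-- Legendre's incomplete integral of the first kind in Jacobi's form: its inverse is
`sn (·, √m)`, and `ellipticF m 1 = K (√m)`. -/
noncomputable def ellipticF (m x : ℝ) : ℝ := ∫ t in (0 : ℝ)..x, ellipticIntegrand m t

variable {m a t : ℝ}

lemma one_sub_mul_sq_pos (hm : m < 1) (ht : t ^ 2 ≤ 1) : 0 < 1 - m * t ^ 2 := by
  nlinarith [mul_nonneg (sub_nonneg.2 hm.le) (sq_nonneg t)]

lemma one_sub_sq_mul_one_sub_mul_sq_pos (hm : m < 1) (ht : t ∈ Ioo (-1) 1) :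
    0 < (1 - t ^ 2) * (1 - m * t ^ 2) := by
  have ht2 : t ^ 2 < 1 := by nlinarith [ht.1, ht.2]
  exact mul_pos (by linarith) (one_sub_mul_sq_pos hm ht2.le)

lemma ellipticIntegrand_eq (ht : t ^ 2 ≤ 1) :
    ellipticIntegrand m t = 1 / (√(1 - t ^ 2) * √(1 - m * t ^ 2)) := by
  rw [ellipticIntegrand, sqrt_mul (by linarith)]

lemma ellipticIntegrand_pos (hm : m < 1) (ht : t ∈ Ioo (-1) 1) : 0 < ellipticIntegrand m t :=
  one_div_pos.2 (sqrt_pos.2 (one_sub_sq_mul_one_sub_mul_sq_pos hm ht))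

lemma continuousOn_ellipticIntegrand (hm : m < 1) :
    ContinuousOn (ellipticIntegrand m) (Ioo (-1) 1) :=
  continuousOn_const.div (by fun_prop) fun _ ht ↦
    (sqrt_pos.2 (one_sub_sq_mul_one_sub_mul_sq_pos hm ht)).ne'

lemma intervalIntegrable_ellipticIntegrand (hm : m < 1) :
    IntervalIntegrable (ellipticIntegrand m) volume 0 1 := by
  have harcsin : IntervalIntegrable (fun t ↦ 1 / √(1 - t ^ 2)) volume 0 1 := by
    refine intervalIntegrable_deriv_of_nonneg continuous_arcsin.continuousOn
      (fun t ht ↦ hasDerivAt_arcsin ?_ ?_) (fun t _ ↦ by positivity)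
    all_goals simp only [zero_le_one, min_eq_left, max_eq_right, mem_Ioo] at ht; linarith
  have hcont : ContinuousOn (fun t : ℝ ↦ 1 / √(1 - m * t ^ 2)) (uIcc 0 1) := by
    refine continuousOn_const.div (by fun_prop) fun t ht ↦ (sqrt_pos.2 ?_).ne'
    rw [uIcc_of_le zero_le_one] at ht
    exact one_sub_mul_sq_pos hm (by nlinarith [ht.1, ht.2])
  refine (harcsin.mul_continuousOn hcont).congr_uIoo fun t ht ↦ ?_
  rw [uIoo_of_le zero_le_one] at ht
  rw [ellipticIntegrand_eq (by nlinarith [ht.1, ht.2])]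
  exact one_div_mul_one_div _ _

lemma hasDerivAt_ellipticF (hm : m < 1) {x : ℝ} (hx : x ∈ Ioo (-1) 1) :
    HasDerivAt (ellipticF m) (ellipticIntegrand m x) x := by
  have hsub : uIcc 0 x ⊆ Ioo (-1) 1 := ordConnected_Ioo.uIcc_subset (by norm_num) hx
  refine integral_hasDerivAt_right
    ((continuousOn_ellipticIntegrand hm).mono hsub).intervalIntegrable ?_
    ((continuousOn_ellipticIntegrand hm).continuousAt (isOpen_Ioo.mem_nhds hx))
  have hmeas : Measurable (ellipticIntegrand m) := by unfold ellipticIntegrand; fun_prop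
  exact hmeas.stronglyMeasurable.stronglyMeasurableAtFilter

lemma continuousOn_ellipticF (hm : m < 1) : ContinuousOn (ellipticF m) (Icc 0 1) := by
  have := continuousOn_primitive_interval' (intervalIntegrable_ellipticIntegrand hm) left_mem_uIcc
  rwa [uIcc_of_le zero_le_one] at this

lemma strictMonoOn_ellipticF (hm : m < 1) : StrictMonoOn (ellipticF m) (Ioo (-1) 1) := by
  refine strictMonoOn_of_deriv_pos (convex_Ioo _ _)
    (fun x hx ↦ (hasDerivAt_ellipticF hm hx).continuousAt.continuousWithinAt) fun x hx ↦ ?_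
  rw [interior_Ioo] at hx
  rw [(hasDerivAt_ellipticF hm hx).deriv]
  exact ellipticIntegrand_pos hm hx

lemma hasDerivAt_sqrt_one_sub_mul_sq (c : ℝ) {x : ℝ} (hx : 0 < 1 - c * x ^ 2) :
    HasDerivAt (fun x ↦ √(1 - c * x ^ 2)) (-(c * x) / √(1 - c * x ^ 2)) x := by
  convert (((hasDerivAt_pow 2 x).const_mul c).const_sub 1).sqrt hx.ne' using 1
  field_simp
  ring

/-- With `a = sn c` and `t = sn u`, the addition theorem gives `snSub m a t = sn (c - u)`,
`cnSub m a t = cn (c - u)` and `dnSub m a t = dn (c - u)`. -/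
noncomputable def snSub (m a t : ℝ) : ℝ :=
  (a * √(1 - t ^ 2) * √(1 - m * t ^ 2) - t * √(1 - a ^ 2) * √(1 - m * a ^ 2)) /
    (1 - m * a ^ 2 * t ^ 2)

noncomputable def cnSub (m a t : ℝ) : ℝ :=
  (√(1 - a ^ 2) * √(1 - t ^ 2) + a * t * √(1 - m * a ^ 2) * √(1 - m * t ^ 2)) /
    (1 - m * a ^ 2 * t ^ 2)

noncomputable def dnSub (m a t : ℝ) : ℝ :=
  (√(1 - m * a ^ 2) * √(1 - m * t ^ 2) + m * a * t * √(1 - a ^ 2) * √(1 - t ^ 2)) /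
    (1 - m * a ^ 2 * t ^ 2)

lemma one_sub_mul_sq_mul_sq_pos (hm : m < 1) (ha : a ^ 2 ≤ 1) (ht : t ^ 2 ≤ 1) :
    0 < 1 - m * a ^ 2 * t ^ 2 := by
  have := one_sub_mul_sq_pos hm (t := a * t) (by rw [mul_pow]; nlinarith)
  rwa [mul_pow, ← mul_assoc] at this

lemma snSub_zero_right (m a : ℝ) : snSub m a 0 = a := by
  simp [snSub]

lemma snSub_sq_add_cnSub_sq (hm : m < 1) (ha : a ^ 2 ≤ 1) (ht : t ^ 2 ≤ 1) :
    snSub m a t ^ 2 + cnSub m a t ^ 2 = 1 := by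
  have hD := one_sub_mul_sq_mul_sq_pos hm ha ht
  have hy2 : √(1 - t ^ 2) ^ 2 = 1 - t ^ 2 := sq_sqrt (by linarith)
  have hz2 : √(1 - m * t ^ 2) ^ 2 = 1 - m * t ^ 2 := sq_sqrt (one_sub_mul_sq_pos hm ht).le
  have hA2 : √(1 - a ^ 2) ^ 2 = 1 - a ^ 2 := sq_sqrt (by linarith)
  have hB2 : √(1 - m * a ^ 2) ^ 2 = 1 - m * a ^ 2 := sq_sqrt (one_sub_mul_sq_pos hm ha).le
  rw [snSub, cnSub, div_pow, div_pow, ← add_div, div_eq_one_iff_eq (pow_pos hD 2).ne']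
  set y := √(1 - t ^ 2)
  set z := √(1 - m * t ^ 2)
  set A := √(1 - a ^ 2)
  set B := √(1 - m * a ^ 2)
  linear_combination (a ^ 2 * z ^ 2 + (1 - a ^ 2)) * hy2 +
    (a ^ 2 * (1 - t ^ 2) + a ^ 2 * t ^ 2 * (1 - m * a ^ 2)) * hz2 + (t ^ 2 * B ^ 2 + y ^ 2) * hA2 +
    (t ^ 2 * (1 - a ^ 2) + a ^ 2 * t ^ 2 * z ^ 2) * hB2

lemma mul_snSub_sq_add_dnSub_sq (hm : m < 1) (ha : a ^ 2 ≤ 1) (ht : t ^ 2 ≤ 1) :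
    m * snSub m a t ^ 2 + dnSub m a t ^ 2 = 1 := by
  have hD := one_sub_mul_sq_mul_sq_pos hm ha ht
  have hy2 : √(1 - t ^ 2) ^ 2 = 1 - t ^ 2 := sq_sqrt (by linarith)
  have hz2 : √(1 - m * t ^ 2) ^ 2 = 1 - m * t ^ 2 := sq_sqrt (one_sub_mul_sq_pos hm ht).le
  have hA2 : √(1 - a ^ 2) ^ 2 = 1 - a ^ 2 := sq_sqrt (by linarith)
  have hB2 : √(1 - m * a ^ 2) ^ 2 = 1 - m * a ^ 2 := sq_sqrt (one_sub_mul_sq_pos hm ha).le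
  rw [snSub, dnSub, div_pow, div_pow, ← mul_div_assoc, ← add_div,
    div_eq_one_iff_eq (pow_pos hD 2).ne']
  set y := √(1 - t ^ 2)
  set z := √(1 - m * t ^ 2)
  set A := √(1 - a ^ 2)
  set B := √(1 - m * a ^ 2)
  linear_combination (m * a ^ 2 * z ^ 2 + m ^ 2 * a ^ 2 * t ^ 2 * (1 - a ^ 2)) * hy2 +
    (m * a ^ 2 * (1 - t ^ 2) + (1 - m * a ^ 2)) * hz2 +
    (m * t ^ 2 * B ^ 2 + m ^ 2 * a ^ 2 * t ^ 2 * y ^ 2) * hA2 +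
    (m * t ^ 2 * (1 - a ^ 2) + z ^ 2) * hB2

lemma hasDerivAt_snSub (hm : m < 1) (ha : a ^ 2 ≤ 1) (ht : t ^ 2 < 1) :
    HasDerivAt (snSub m a)
      (-(cnSub m a t * dnSub m a t) / (√(1 - t ^ 2) * √(1 - m * t ^ 2))) t := by
  have hz0 := one_sub_mul_sq_pos hm ht.le
  have hD0 := one_sub_mul_sq_mul_sq_pos hm ha ht.le
  have hy := hasDerivAt_sqrt_one_sub_mul_sq 1 (x := t) (by linarith)
  simp only [one_mul] at hy
  have hN := ((hy.const_mul a).mul (hasDerivAt_sqrt_one_sub_mul_sq m hz0)).sub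
    (((hasDerivAt_id' t).mul_const √(1 - a ^ 2)).mul_const √(1 - m * a ^ 2))
  have hD := ((hasDerivAt_pow 2 t).const_mul (m * a ^ 2)).const_sub 1
  have hy0 : 0 < √(1 - t ^ 2) := sqrt_pos.2 (by linarith)
  have hz0' : 0 < √(1 - m * t ^ 2) := sqrt_pos.2 hz0
  have hy2 : √(1 - t ^ 2) ^ 2 = 1 - t ^ 2 := sq_sqrt (by linarith)
  have hz2 : √(1 - m * t ^ 2) ^ 2 = 1 - m * t ^ 2 := sq_sqrt hz0.le
  have hA2 : √(1 - a ^ 2) ^ 2 = 1 - a ^ 2 := sq_sqrt (by linarith)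
  have hB2 : √(1 - m * a ^ 2) ^ 2 = 1 - m * a ^ 2 := sq_sqrt (one_sub_mul_sq_pos hm ha).le
  refine (hN.div hD (by simpa [mul_assoc] using hD0.ne')).congr_deriv ?_
  simp only [Pi.mul_apply, Pi.sub_apply, Nat.cast_ofNat, Nat.reduceSub, pow_one, cnSub, dnSub]
  set y := √(1 - t ^ 2)
  set z := √(1 - m * t ^ 2)
  set A := √(1 - a ^ 2)
  set B := √(1 - m * a ^ 2)
  have hnum : (-(a * t * (z ^ 2 + m * y ^ 2)) - A * B * y * z) * (1 - m * a ^ 2 * t ^ 2) +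
      2 * m * a ^ 2 * t * (a * y * z - t * A * B) * y * z =
      -((A * y + a * t * B * z) * (B * z + m * a * t * A * y)) := by
    linear_combination (a * t * m * a ^ 2 * z ^ 2) * hy2 + (a * t * m * a ^ 2 * y ^ 2) * hz2 +
      (a * t * m * y ^ 2) * hA2 + (a * t * z ^ 2) * hB2
  field_simp
  rw [← neg_div]
  congr 1
  linear_combination hnum

lemma cnSub_pos (hm : m < 1) (ha0 : 0 < a) (ha1 : a ≤ 1) (ht0 : 0 < t) (ht1 : t < 1) :
    0 < cnSub m a t := by
  have ha : a ^ 2 ≤ 1 := by nlinarith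
  have ht : t ^ 2 ≤ 1 := by nlinarith
  have := sqrt_pos.2 (one_sub_mul_sq_pos hm ha)
  have := sqrt_pos.2 (one_sub_mul_sq_pos hm ht)
  have := one_sub_mul_sq_mul_sq_pos hm ha ht
  unfold cnSub
  positivity

lemma dnSub_pos (hm0 : 0 ≤ m) (hm1 : m < 1) (ha0 : 0 ≤ a) (ha1 : a ≤ 1) (ht0 : 0 ≤ t)
    (ht1 : t ≤ 1) : 0 < dnSub m a t := by
  have ha : a ^ 2 ≤ 1 := by nlinarith
  have ht : t ^ 2 ≤ 1 := by nlinarith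
  have := sqrt_pos.2 (one_sub_mul_sq_pos hm1 ha)
  have := sqrt_pos.2 (one_sub_mul_sq_pos hm1 ht)
  have := one_sub_mul_sq_mul_sq_pos hm1 ha ht
  unfold dnSub
  positivity

lemma ellipticIntegrand_snSub (hm0 : 0 ≤ m) (hm1 : m < 1) (ha0 : 0 < a) (ha1 : a ≤ 1)
    (ht0 : 0 < t) (ht1 : t < 1) :
    ellipticIntegrand m (snSub m a t) = 1 / (cnSub m a t * dnSub m a t) := by
  have ha : a ^ 2 ≤ 1 := by nlinarith
  have ht : t ^ 2 ≤ 1 := by nlinarith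
  have hcn : 1 - snSub m a t ^ 2 = cnSub m a t ^ 2 := by
    linarith [snSub_sq_add_cnSub_sq hm1 ha ht]
  have hdn : 1 - m * snSub m a t ^ 2 = dnSub m a t ^ 2 := by
    linarith [mul_snSub_sq_add_dnSub_sq hm1 ha ht]
  rw [ellipticIntegrand, hcn, hdn, ← mul_pow, sqrt_sq (mul_pos (cnSub_pos hm1 ha0 ha1 ht0 ht1)
    (dnSub_pos hm0 hm1 ha0.le ha1 ht0.le ht1.le)).le]

lemma hasDerivAt_ellipticF_snSub (hm0 : 0 ≤ m) (hm1 : m < 1) (ha0 : 0 < a) (ha1 : a ≤ 1)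
    (ht0 : 0 < t) (ht1 : t < 1) :
    HasDerivAt (fun t ↦ ellipticF m (snSub m a t)) (-ellipticIntegrand m t) t := by
  have ha : a ^ 2 ≤ 1 := by nlinarith
  have ht : t ^ 2 < 1 := by nlinarith
  have hsn : snSub m a t ∈ Ioo (-1) 1 := by
    have := snSub_sq_add_cnSub_sq hm1 ha ht.le
    have := cnSub_pos hm1 ha0 ha1 ht0 ht1
    constructor <;> nlinarith
  refine ((hasDerivAt_ellipticF hm1 hsn).comp t (hasDerivAt_snSub hm1 ha ht)).congr_deriv ?_
  have := cnSub_pos hm1 ha0 ha1 ht0 ht1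
  have := dnSub_pos hm0 hm1 ha0.le ha1 ht0.le ht1.le
  have := sqrt_pos.2 (show 0 < 1 - t ^ 2 by linarith)
  have := sqrt_pos.2 (one_sub_mul_sq_pos hm1 ht.le)
  rw [ellipticIntegrand_snSub hm0 hm1 ha0 ha1 ht0 ht1, ellipticIntegrand_eq ht.le]
  field_simp

lemma snSub_nonneg (hm : m < 1) (ha0 : 0 ≤ a) (ha1 : a ≤ 1) (ht0 : 0 ≤ t) (hta : t ≤ a) :
    0 ≤ snSub m a t := by
  have ha : a ^ 2 ≤ 1 := by nlinarith
  have ht : t ^ 2 ≤ 1 := by nlinarith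
  have hD := one_sub_mul_sq_mul_sq_pos hm ha ht
  have hy2 : √(1 - t ^ 2) ^ 2 = 1 - t ^ 2 := sq_sqrt (by linarith)
  have hz2 : √(1 - m * t ^ 2) ^ 2 = 1 - m * t ^ 2 := sq_sqrt (one_sub_mul_sq_pos hm ht).le
  have hA2 : √(1 - a ^ 2) ^ 2 = 1 - a ^ 2 := sq_sqrt (by linarith)
  have hB2 : √(1 - m * a ^ 2) ^ 2 = 1 - m * a ^ 2 := sq_sqrt (one_sub_mul_sq_pos hm ha).le
  refine div_nonneg (sub_nonneg.2 ?_) hD.le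
  set y := √(1 - t ^ 2)
  set z := √(1 - m * t ^ 2)
  set A := √(1 - a ^ 2)
  set B := √(1 - m * a ^ 2)
  have hsq : (a * y * z) ^ 2 - (t * A * B) ^ 2 = (a ^ 2 - t ^ 2) * (1 - m * a ^ 2 * t ^ 2) := by
    linear_combination a ^ 2 * z ^ 2 * hy2 + a ^ 2 * (1 - t ^ 2) * hz2 - t ^ 2 * B ^ 2 * hA2 -
      t ^ 2 * (1 - a ^ 2) * hB2
  refine (pow_le_pow_iff_left₀ (by positivity) (by positivity) two_ne_zero).1 ?_
  nlinarith [mul_nonneg (show 0 ≤ a ^ 2 - t ^ 2 by nlinarith) hD.le]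

lemma snSub_le_one (hm : m < 1) (ha : a ^ 2 ≤ 1) (ht : t ^ 2 ≤ 1) : snSub m a t ≤ 1 := by
  nlinarith [snSub_sq_add_cnSub_sq hm ha ht, sq_nonneg (cnSub m a t)]

lemma continuousOn_snSub (hm : m < 1) (ha : a ^ 2 ≤ 1) :
    ContinuousOn (snSub m a) {t | t ^ 2 ≤ 1} :=
  ContinuousOn.div (by fun_prop) (by fun_prop) fun _ ht ↦
    (one_sub_mul_sq_mul_sq_pos hm ha ht).ne'

theorem ellipticF_snSub_add (hm0 : 0 ≤ m) (hm1 : m < 1) (ha0 : 0 < a) (ha1 : a ≤ 1)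
    (ht : t ∈ Icc 0 a) : ellipticF m (snSub m a t) + ellipticF m t = ellipticF m a := by
  have ha : a ^ 2 ≤ 1 := by nlinarith
  set G := fun x ↦ ellipticF m (snSub m a x) + ellipticF m x
  have hG0 : G 0 = ellipticF m a := by simp [G, snSub_zero_right, ellipticF]
  rcases ht.1.eq_or_lt with rfl | ht0
  · exact hG0
  have hsq : ∀ x ∈ Icc 0 t, x ^ 2 ≤ 1 := fun x hx ↦ by nlinarith [hx.1, hx.2, ht.2]
  have hcont : ContinuousOn G (Icc 0 t) := by
    refine ((continuousOn_ellipticF hm1).comp ((continuousOn_snSub hm1 ha).mono hsq)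
      fun x hx ↦ ?_).add ((continuousOn_ellipticF hm1).mono fun x hx ↦ ?_)
    · exact ⟨snSub_nonneg hm1 ha0.le ha1 hx.1 (hx.2.trans ht.2),
        snSub_le_one hm1 ha (hsq x hx)⟩
    · exact ⟨hx.1, hx.2.trans (ht.2.trans ha1)⟩
  obtain ⟨-, -, hslope⟩ := exists_hasDerivAt_eq_slope G (fun _ ↦ 0) ht0 hcont fun x hx ↦
    ((hasDerivAt_ellipticF_snSub hm0 hm1 ha0 ha1 hx.1 (hx.2.trans_le (ht.2.trans ha1))).add
      (hasDerivAt_ellipticF hm1 ⟨by linarith [hx.1], by linarith [hx.2, ht.2]⟩)).congr_deriv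
      (neg_add_cancel _)
  rw [eq_comm, div_eq_zero_iff, sub_eq_zero, sub_zero] at hslope
  exact (hslope.resolve_right ht0.ne').trans hG0

/-- `sn (c / 2)` for `a = sn c`, by the half-argument formula
`sn² (c / 2) = (1 - cn c) / (1 + dn c)`. -/
noncomputable def snHalf (m a : ℝ) : ℝ := √((1 - √(1 - a ^ 2)) / (1 + √(1 - m * a ^ 2)))

lemma snHalf_sq (m a : ℝ) :
    snHalf m a ^ 2 = (1 - √(1 - a ^ 2)) / (1 + √(1 - m * a ^ 2)) :=
  sq_sqrt (div_nonneg (sub_nonneg.2 (sqrt_le_one.2 (by nlinarith))) (by positivity))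

lemma snHalf_pos (ha0 : 0 < a) : 0 < snHalf m a := by
  refine sqrt_pos.2 (div_pos (sub_pos.2 ((sqrt_lt' one_pos).2 ?_)) (by positivity))
  nlinarith

lemma snHalf_le (ha0 : 0 ≤ a) (ha1 : a ≤ 1) : snHalf m a ≤ a := by
  have hA2 : √(1 - a ^ 2) ^ 2 = 1 - a ^ 2 := sq_sqrt (by nlinarith)
  have hA0 := sqrt_nonneg (1 - a ^ 2)
  have hB0 := sqrt_nonneg (1 - m * a ^ 2)
  have hA1 : √(1 - a ^ 2) ≤ 1 := sqrt_le_one.2 (by nlinarith)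
  refine (sqrt_le_left ha0).2 ((div_le_iff₀ (by positivity)).2 ?_)
  nlinarith [mul_nonneg (sq_nonneg a) hB0, mul_nonneg hA0 (sub_nonneg.2 hA1)]

lemma snHalf_lt_one (hm : m < 1) (ha : a ^ 2 ≤ 1) : snHalf m a < 1 := by
  have := sqrt_pos.2 (one_sub_mul_sq_pos hm ha)
  rw [snHalf, sqrt_lt' one_pos, one_pow, div_lt_one (by positivity)]
  linarith [sqrt_nonneg (1 - a ^ 2)]

lemma one_sub_mul_sq_snHalf (hm : m < 1) (ha : a ^ 2 ≤ 1) :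
    1 - m * snHalf m a ^ 2 = (√(1 - a ^ 2) + √(1 - m * a ^ 2)) / (1 + √(1 - a ^ 2)) := by
  have hA2 : √(1 - a ^ 2) ^ 2 = 1 - a ^ 2 := sq_sqrt (by linarith)
  have hB2 : √(1 - m * a ^ 2) ^ 2 = 1 - m * a ^ 2 := sq_sqrt (one_sub_mul_sq_pos hm ha).le
  have hA0 := sqrt_nonneg (1 - a ^ 2)
  have hB0 := sqrt_nonneg (1 - m * a ^ 2)
  rw [snHalf_sq]
  field_simp
  linear_combination m * hA2 - hB2

lemma snSub_snHalf (hm : m < 1) (ha0 : 0 ≤ a) (ha1 : a ≤ 1) :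
    snSub m a (snHalf m a) = snHalf m a := by
  have ha : a ^ 2 ≤ 1 := by nlinarith
  have hh := snHalf_le (m := m) ha0 ha1
  have hh0 : 0 ≤ snHalf m a := sqrt_nonneg _
  have hh2 := snHalf_sq m a
  have hD := one_sub_mul_sq_mul_sq_pos hm ha (t := snHalf m a) (by nlinarith)
  have hz := one_sub_mul_sq_snHalf hm ha
  have hA2 : √(1 - a ^ 2) ^ 2 = 1 - a ^ 2 := sq_sqrt (by linarith)
  have hB2 : √(1 - m * a ^ 2) ^ 2 = 1 - m * a ^ 2 := sq_sqrt (one_sub_mul_sq_pos hm ha).le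
  have hA0 := sqrt_nonneg (1 - a ^ 2)
  have hB0 := sqrt_nonneg (1 - m * a ^ 2)
  set h := snHalf m a
  set A := √(1 - a ^ 2)
  set B := √(1 - m * a ^ 2)
  have hy : 1 - h ^ 2 = (A + B) / (1 + B) := by
    rw [hh2]; field_simp; ring
  have hyz : a * √(1 - h ^ 2) * √(1 - m * h ^ 2) = h * (A + B) := by
    rw [← sq_eq_sq₀ (by positivity) (by positivity), mul_pow, mul_pow,
      sq_sqrt (by rw [hy]; positivity), sq_sqrt (by rw [hz]; positivity), hy, hz, mul_pow, hh2]
    field_simp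
    linear_combination (A + B) ^ 2 * hA2
  have hDAB : 1 - m * a ^ 2 * h ^ 2 = A + B - A * B := by
    rw [hh2]
    field_simp
    linear_combination (A - 1) * hB2
  show (a * √(1 - h ^ 2) * √(1 - m * h ^ 2) - h * A * B) / (1 - m * a ^ 2 * h ^ 2) = h
  rw [hyz, hDAB]
  rw [hDAB] at hD
  field_simp

theorem two_mul_ellipticF_snHalf (hm0 : 0 ≤ m) (hm1 : m < 1) (ha0 : 0 < a) (ha1 : a ≤ 1) :
    2 * ellipticF m (snHalf m a) = ellipticF m a := by
  have := ellipticF_snSub_add hm0 hm1 ha0 ha1 (t := snHalf m a)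
    ⟨(snHalf_pos ha0).le, snHalf_le ha0.le ha1⟩
  rwa [snSub_snHalf hm1 ha0.le ha1, ← two_mul] at this

/-- Proof of Corollary 4.4: with `K' = K(√(1-q²)) = ∫₀¹ dt/√((1-t²)(1-(1-q²)t²))`,
if `s = sn(K'/4, √(1-q²)) ∈ (0,1)`, i.e. `∫₀^s dt/√((1-t²)(1-(1-q²)t²)) = K'/4`,
then `dn²(K'/4) = 1 - (1-q²)s² = √q (√(1+q) + 1)/(√(1+q) + √q)`. -/
theorem stmt13 (q s : ℝ) (hq : 0 < q) (hq1 : q < 1) (hs : 0 < s) (hs1 : s < 1)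
    (h : (∫ t in (0 : ℝ)..s, 1 / Real.sqrt ((1 - t ^ 2) * (1 - (1 - q ^ 2) * t ^ 2))) =
      (∫ t in (0 : ℝ)..1, 1 / Real.sqrt ((1 - t ^ 2) * (1 - (1 - q ^ 2) * t ^ 2))) / 4) :
    1 - (1 - q ^ 2) * s ^ 2 =
      Real.sqrt q * (Real.sqrt (1 + q) + 1) / (Real.sqrt (1 + q) + Real.sqrt q) := by
  set m := 1 - q ^ 2 with hm
  change ellipticF m s = ellipticF m 1 / 4 at h
  have hm0 : 0 ≤ m := by nlinarith
  have hm1 : m < 1 := by nlinarith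
  set s₁ := snHalf m 1
  have hs₁ : 0 < s₁ ∧ s₁ ≤ 1 := ⟨snHalf_pos one_pos, snHalf_le zero_le_one le_rfl⟩
  have hs₀ : snHalf m s₁ ∈ Ioo (-1) 1 :=
    ⟨by linarith [snHalf_pos (m := m) hs₁.1], snHalf_lt_one hm1 (by nlinarith)⟩
  have hs : s = snHalf m s₁ := by
    refine (strictMonoOn_ellipticF hm1).injOn ⟨by linarith, hs1⟩ hs₀ ?_
    linarith [two_mul_ellipticF_snHalf hm0 hm1 one_pos le_rfl,
      two_mul_ellipticF_snHalf hm0 hm1 hs₁.1 hs₁.2]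
  have hB₀ : √(1 - m * 1 ^ 2) = q := by
    rw [hm, one_pow, mul_one, sub_sub_cancel, sqrt_sq hq.le]
  have hs₁sq : s₁ ^ 2 = 1 / (1 + q) := by
    rw [snHalf_sq, hB₀]; norm_num
  have hA₁ : √(1 - s₁ ^ 2) = √q / √(1 + q) := by
    rw [hs₁sq, ← sqrt_div hq.le]
    congr 1
    field_simp
    ring
  have hB₁ : √(1 - m * s₁ ^ 2) = √q := by
    rw [one_sub_mul_sq_snHalf hm1 (by norm_num), hB₀]
    norm_num
  rw [hs, one_sub_mul_sq_snHalf hm1 (by nlinarith), hA₁, hB₁]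
  have := sqrt_pos.2 hq
  have := sqrt_pos.2 (show 0 < 1 + q by linarith)
  field_simp
  ring
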